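/- A Rees algebra A and its differential closure B have the same singular locus: a point p is in the singular locus of A (i.e., ord_p(A_i) ≥ i for all i) if and only if it is in the singular locus of B, where B is generated by the ideals Δ^j(A_k) in degree k−j for k in a generating set and j < k. -/

import Mathlib

/-! A point lies in the singular locus of a Rees algebra `A` iff `A i ≤ m ^ i` for all `i`.
A derivation lowers the `m`-adic order by at most one, so `Δʲ(A n) ≤ m ^ (n - j)`: the generators
of `B`, hence `B` itself, satisfy this bound when `A` does. Conversely every `A n` with `n ∈ K` is
a generator of `B` (take `j = 0`), and `A` is generated in the degrees of `K`. -/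

/-- The order of an ideal `I` in a local ring: the largest `n` with `I ⊆ m^n`. -/
noncomputable def idealOrd {R : Type*} [CommRing R] [IsLocalRing R] (I : Ideal R) : ℕ∞ :=
  ⨆ n ∈ {n : ℕ | I ≤ IsLocalRing.maximalIdeal R ^ n}, (n : ℕ∞)

/-- `Δ(I)`: the ideal generated by `I` together with all first-order derivatives
of sections of `I` (over the base `k`). -/
noncomputable def deltaIdeal (k : Type*) {R : Type*} [CommRing k] [CommRing R] [Algebra k R]
    (I : Ideal R) : Ideal R :=
  I ⊔ Ideal.span {x | ∃ (D : Derivation k R R) (a : R), a ∈ I ∧ D a = x}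

/-- Iterated `Δ` operator. -/
noncomputable def deltaIter (k : Type*) {R : Type*} [CommRing k] [CommRing R] [Algebra k R] :
    ℕ → Ideal R → Ideal R
  | 0, I => I
  | j + 1, I => deltaIdeal k (deltaIter k j I)

/-- The Rees algebra generated by a family `G` of ideals, `G d` sitting in degree `d`. -/
noncomputable def reesGen {R : Type*} [CommRing R] (G : ℕ → Ideal R) : ℕ → Ideal R := fun i =>
  if i = 0 then ⊤ else
    ⨆ (s : Multiset ℕ) (_ : s.sum = i) (_ : 0 ∉ s), (s.map G).prod

/-- `A` is generated in the degrees of the finite set `K`. -/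
def HasGeneratingDegrees {R : Type*} [CommRing R] (A : ℕ → Ideal R) (K : Finset ℕ) : Prop :=
  ∀ i : ℕ, 0 < i →
    A i = ⨆ (s : Multiset ℕ) (_ : ∀ j ∈ s, j ∈ K) (_ : s.sum = i), (s.map A).prod

open IsLocalRing

theorem Derivation.apply_mem_pow_of_mem_pow_succ {k R : Type*} [CommRing k] [CommRing R]
    [Algebra k R] (D : Derivation k R R) (I : Ideal R) :
    ∀ (n : ℕ), ∀ a ∈ I ^ (n + 1), D a ∈ I ^ n
  | 0, _, _ => by simp
  | n + 1, a, ha => by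
    rw [pow_succ] at ha
    refine Submodule.mul_induction_on ha (fun x hx y hy => ?_) fun x y hx hy => ?_
    · have hyDx : y * D x ∈ I ^ (n + 1) := by
        rw [pow_succ']
        exact Ideal.mul_mem_mul hy (D.apply_mem_pow_of_mem_pow_succ I n x hx)
      rw [Derivation.leibniz, smul_eq_mul, smul_eq_mul]
      exact Ideal.add_mem _ (Ideal.mul_mem_right _ _ hx) hyDx
    · rw [map_add]
      exact Ideal.add_mem _ hx hy

section Delta

variable {k R : Type*} [CommRing k] [CommRing R] [Algebra k R]

theorem deltaIdeal_le_pow {I J : Ideal R} {n : ℕ} (h : I ≤ J ^ (n + 1)) :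
    deltaIdeal k I ≤ J ^ n := by
  refine sup_le (h.trans (Ideal.pow_le_pow_right n.le_succ)) ?_
  rw [Ideal.span_le]
  rintro _ ⟨D, a, ha, rfl⟩
  exact D.apply_mem_pow_of_mem_pow_succ J n a (h ha)

theorem deltaIter_le_pow {I J : Ideal R} {n : ℕ} (h : I ≤ J ^ n) :
    ∀ j, deltaIter k j I ≤ J ^ (n - j)
  | 0 => h
  | j + 1 => by
    by_cases hjn : j < n
    · have ih := deltaIter_le_pow h j
      rw [show n - j = n - (j + 1) + 1 by omega] at ih
      exact deltaIdeal_le_pow ih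
    · rw [show n - (j + 1) = 0 by omega, pow_zero, Ideal.one_eq_top]
      exact le_top

end Delta

theorem Ideal.multiset_prod_map_le_pow_sum {R : Type*} [CommRing R] {J : Ideal R} {F : ℕ → Ideal R}
    {s : Multiset ℕ} (h : ∀ d ∈ s, F d ≤ J ^ d) : (s.map F).prod ≤ J ^ s.sum := by
  induction s using Multiset.induction with
  | empty => simp
  | cons a s ih =>
    rw [Multiset.map_cons, Multiset.prod_cons, Multiset.sum_cons, pow_add]
    exact Ideal.mul_mono (h a (Multiset.mem_cons_self a s))
      (ih fun d hd => h d (Multiset.mem_cons_of_mem hd))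

section Rees

variable {R : Type*} [CommRing R]

theorem reesGen_le_pow {G : ℕ → Ideal R} {J : Ideal R} (h : ∀ d, G d ≤ J ^ d) (i : ℕ) :
    reesGen G i ≤ J ^ i := by
  rcases eq_or_ne i 0 with rfl | hi
  · simp
  rw [reesGen, if_neg hi]
  refine iSup₂_le fun s hs => iSup_le fun _ => ?_
  exact hs ▸ Ideal.multiset_prod_map_le_pow_sum fun d _ => h d

theorem le_reesGen (G : ℕ → Ideal R) (d : ℕ) : G d ≤ reesGen G d := by
  rcases eq_or_ne d 0 with rfl | hd
  · simp [reesGen]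
  rw [reesGen, if_neg hd]
  refine le_iSup₂_of_le {d} (Multiset.sum_singleton d) (le_iSup_of_le (by simpa using hd.symm) ?_)
  simp

theorem HasGeneratingDegrees.le_pow {A : ℕ → Ideal R} {K : Finset ℕ}
    (hgen : HasGeneratingDegrees A K) {J : Ideal R} (hK : ∀ n ∈ K, A n ≤ J ^ n) (i : ℕ) :
    A i ≤ J ^ i := by
  rcases Nat.eq_zero_or_pos i with rfl | hi
  · simp
  rw [hgen i hi]
  refine iSup₂_le fun s hs => iSup_le fun hsum => ?_
  exact hsum ▸ Ideal.multiset_prod_map_le_pow_sum fun d hd => hK d (hs d hd)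

end Rees

noncomputable def differentialGenerators (k : Type*) {R : Type*} [CommRing k] [CommRing R]
    [Algebra k R] (A : ℕ → Ideal R) (K : Finset ℕ) (d : ℕ) : Ideal R :=
  ⨆ (n : ℕ) (_ : n ∈ K) (j : ℕ) (_ : j < n) (_ : n - j = d), deltaIter k j (A n)

section DifferentialClosure

variable {k R : Type*} [CommRing k] [CommRing R] [Algebra k R] {A : ℕ → Ideal R} {K : Finset ℕ}

theorem differentialGenerators_le_pow {J : Ideal R} (hA : ∀ n, A n ≤ J ^ n) (d : ℕ) :
    differentialGenerators k A K d ≤ J ^ d := by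
  refine iSup₂_le fun n _ => iSup₂_le fun j _ => iSup_le fun hd => ?_
  exact hd ▸ deltaIter_le_pow (hA n) j

theorem le_reesGen_differentialGenerators {n : ℕ} (hn : n ∈ K) :
    A n ≤ reesGen (differentialGenerators k A K) n := by
  rcases Nat.eq_zero_or_pos n with rfl | hpos
  · simp [reesGen]
  refine le_trans ?_ (le_reesGen _ n)
  exact le_iSup₂_of_le n hn (le_iSup₂_of_le 0 hpos (le_iSup_of_le n.sub_zero le_rfl))

end DifferentialClosure

theorem natCast_le_idealOrd_iff {R : Type*} [CommRing R] [IsLocalRing R] (I : Ideal R) (i : ℕ) :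
    (i : ℕ∞) ≤ idealOrd I ↔ I ≤ maximalIdeal R ^ i := by
  refine ⟨fun h => ?_, fun h => le_biSup (fun n : ℕ => (n : ℕ∞)) h⟩
  cases i with
  | zero => simp
  | succ i =>
    obtain ⟨n, hn, hin⟩ := lt_biSup_iff.mp ((ENat.natCast_lt_natCast.mpr i.lt_succ_self).trans_le h)
    exact hn.trans (Ideal.pow_le_pow_right (ENat.natCast_lt_natCast.mp hin))

theorem forall_pos_natCast_le_idealOrd_iff {R : Type*} [CommRing R] [IsLocalRing R]
    (A : ℕ → Ideal R) :
    (∀ i : ℕ, 0 < i → (i : ℕ∞) ≤ idealOrd (A i)) ↔ ∀ i, A i ≤ maximalIdeal R ^ i := by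
  refine ⟨fun h i => ?_, fun h i _ => (natCast_le_idealOrd_iff _ i).mpr (h i)⟩
  rcases Nat.eq_zero_or_pos i with rfl | hi
  · simp
  exact (natCast_le_idealOrd_iff _ i).mp (h i hi)

theorem differential_closure_same_singular_locus_general
    {k R : Type*} [Field k] [CommRing R] [IsLocalRing R] [Algebra k R]
    (A : ℕ → Ideal R)
    (K : Finset ℕ) (hgen : HasGeneratingDegrees A K)
    (B : ℕ → Ideal R)
    (hB : B = reesGen (fun d =>
      ⨆ (n : ℕ) (_ : n ∈ K) (j : ℕ) (_ : j < n) (_ : n - j = d), deltaIter k j (A n))) :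
    (∀ i : ℕ, 0 < i → (i : ℕ∞) ≤ idealOrd (A i)) ↔
    (∀ i : ℕ, 0 < i → (i : ℕ∞) ≤ idealOrd (B i)) := by
  change B = reesGen (differentialGenerators k A K) at hB
  subst hB
  rw [forall_pos_natCast_le_idealOrd_iff, forall_pos_natCast_le_idealOrd_iff]
  exact ⟨fun hAm => reesGen_le_pow (differentialGenerators_le_pow hAm),
    fun hBm => hgen.le_pow fun n hn => le_reesGen_differentialGenerators hn |>.trans (hBm n)⟩

/-- a Rees algebra `A` and its differential closure `B` — the Rees
algebra generated by the ideals `Δʲ(A k)` placed in degree `k - j`, for `k` in a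
set `K` of generating degrees and `j < k` — have the same singular locus: at any
point (local ring `R = O_{W,p}` of the characteristic-zero variety `W`),
`ord_p(A i) ≥ i` for all `i > 0` iff `ord_p(B i) ≥ i` for all `i > 0`. -/
theorem differential_closure_same_singular_locus
    {k R : Type*} [Field k] [CharZero k] [CommRing R] [IsLocalRing R] [Algebra k R]
    (A : ℕ → Ideal R) (hA0 : A 0 = ⊤) (hAmul : ∀ i j, A i * A j ≤ A (i + j))
    (K : Finset ℕ) (hKpos : ∀ j ∈ K, 0 < j) (hgen : HasGeneratingDegrees A K)
    (B : ℕ → Ideal R)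
    (hB : B = reesGen (fun d =>
      ⨆ (n : ℕ) (_ : n ∈ K) (j : ℕ) (_ : j < n) (_ : n - j = d), deltaIter k j (A n))) :
    (∀ i : ℕ, 0 < i → (i : ℕ∞) ≤ idealOrd (A i)) ↔
    (∀ i : ℕ, 0 < i → (i : ℕ∞) ≤ idealOrd (B i)) :=
  differential_closure_same_singular_locus_general A K hgen B hB
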